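/- (Gain of regularity through the gauge transform.) Let t ≠ 0, let n ∈ ℕ, and let f : ℝ → ℂ be smooth with f ∈ L²(ℝ) and with (A^m f) ∈ L²(ℝ) for every m = 1, …, n, where (Af)(x) = x·f(x) + 2it·f'(x). Then the function x ↦ e^{-ix²/(4t)} f(x) belongs to the Sobolev space H^n(ℝ); more precisely, for each m ≤ n, the m-th derivative of e^{-ix²/(4t)} f equals e^{-ix²/(4t)} (A^m f)/(2it)^m and hence lies in L²(ℝ). -/

import Mathlib

open MeasureTheory Complex ENNReal

noncomputable section

def Aop (t : ℝ) (f : ℝ → ℂ) : ℝ → ℂ :=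
  fun x => (x : ℂ) * f x + 2 * Complex.I * (t : ℂ) * deriv f x

lemma Aop_contDiff (t : ℝ) (f : ℝ → ℂ) (hf : ContDiff ℝ ((⊤ : ℕ∞) : WithTop ℕ∞) f) :
    ContDiff ℝ ((⊤ : ℕ∞) : WithTop ℕ∞) (Aop t f) := by
  unfold Aop
  have hd : ContDiff ℝ ((⊤ : ℕ∞) : WithTop ℕ∞) (deriv f) :=
    (contDiff_infty_iff_deriv.mp hf).2
  exact (Complex.ofRealCLM.contDiff.mul hf).add (contDiff_const.mul hd)

lemma Aop_iter_contDiff (t : ℝ) (f : ℝ → ℂ) (hf : ContDiff ℝ ((⊤ : ℕ∞) : WithTop ℕ∞) f) (m : ℕ) :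
    ContDiff ℝ ((⊤ : ℕ∞) : WithTop ℕ∞) ((Aop t)^[m] f) := by
  induction m with
  | zero => exact hf
  | succ k ih => rw [Function.iterate_succ_apply']; exact Aop_contDiff t _ ih

lemma hasDerivAt_E (t : ℝ) (x : ℝ) :
    HasDerivAt (fun y : ℝ => Complex.exp (-(Complex.I * (y : ℂ) ^ 2 / (4 * (t : ℂ)))))
      (Complex.exp (-(Complex.I * (x : ℂ) ^ 2 / (4 * (t : ℂ)))) *
        (-(Complex.I * (2 * x) / (4 * (t : ℂ))))) x := by
  have h1 : HasDerivAt (fun y : ℝ => ((y : ℂ))) 1 x := Complex.ofRealCLM.hasDerivAt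
  have hsq : HasDerivAt (fun y : ℝ => (y : ℂ) ^ 2) (2 * (x : ℂ)) x := by
    have := h1.mul h1
    convert this using 1
    all_goals first | rfl | (funext y; simp only [Pi.mul_apply]; ring) | (push_cast; ring)
  have h2 : HasDerivAt (fun y : ℝ => -(Complex.I * (y : ℂ) ^ 2 / (4 * (t : ℂ))))
      (-(Complex.I * (2 * x) / (4 * (t : ℂ)))) x := by
    have := ((hsq.const_mul Complex.I).div_const (4 * (t : ℂ))).neg
    convert this using 1
    all_goals first | rfl | (push_cast; ring)
  exact h2.cexp

lemma abs_E (t : ℝ) (y : ℝ) :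
    ‖Complex.exp (-(Complex.I * (y : ℂ) ^ 2 / (4 * (t : ℂ))))‖ = 1 := by
  have : -(Complex.I * (y : ℂ) ^ 2 / (4 * (t : ℂ))) = ((-(y ^ 2 / (4 * t)) : ℝ) : ℂ) * Complex.I := by
    push_cast; ring
  rw [this, Complex.norm_exp_ofReal_mul_I]

theorem stmt19 (t : ℝ) (ht : t ≠ 0) (n : ℕ) (f : ℝ → ℂ) (hf : ContDiff ℝ (⊤ : ℕ∞) f)
    (hf2 : MemLp f 2 volume)
    (hA : ∀ m : ℕ, 1 ≤ m → m ≤ n → MemLp ((Aop t)^[m] f) 2 volume) :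
    ∀ m : ℕ, m ≤ n →
      (∀ x : ℝ,
        iteratedDeriv m (fun y : ℝ => Complex.exp (-(Complex.I * (y : ℂ) ^ 2 / (4 * (t : ℂ)))) * f y) x
          = Complex.exp (-(Complex.I * (x : ℂ) ^ 2 / (4 * (t : ℂ)))) * (Aop t)^[m] f x
              / (2 * Complex.I * (t : ℂ)) ^ m) ∧
      MemLp (iteratedDeriv m fun y : ℝ =>
          Complex.exp (-(Complex.I * (y : ℂ) ^ 2 / (4 * (t : ℂ)))) * f y) 2 volume := by
  set E : ℝ → ℂ := fun y => Complex.exp (-(Complex.I * (y : ℂ) ^ 2 / (4 * (t : ℂ)))) with hE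
  have ht' : (2 : ℂ) * Complex.I * (t : ℂ) ≠ 0 := by
    simp [Complex.I_ne_zero, Complex.ofReal_ne_zero, ht]
  have contE : Continuous E := by
    apply Complex.continuous_exp.comp
    continuity
  -- key: MemLp of E * h when h is MemLp, given continuity of h
  have memE : ∀ h : ℝ → ℂ, Continuous h → MemLp h 2 volume →
      MemLp (fun y => E y * h y) 2 volume := by
    intro h hc hm
    refine hm.of_le ((contE.mul hc).aestronglyMeasurable) ?_
    filter_upwards with y
    simp [hE, map_mul, abs_E t y]
  intro m hm
  induction m with
  | zero =>
    refine ⟨fun x => by simp, ?_⟩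
    simpa [iteratedDeriv_zero] using memE f hf.continuous hf2
  | succ k ih =>
    obtain ⟨ihd, -⟩ := ih (le_of_lt (Nat.lt_of_succ_le hm))
    set g : ℝ → ℂ := (Aop t)^[k] f with hg
    have hf' : ContDiff ℝ ((⊤ : ℕ∞) : WithTop ℕ∞) f := hf.of_le (by simp)
    have hgc : ContDiff ℝ ((⊤ : ℕ∞) : WithTop ℕ∞) g := Aop_iter_contDiff t f hf' k
    have hgc' : ContDiff ℝ ((⊤ : ℕ∞) : WithTop ℕ∞) ((Aop t)^[k+1] f) :=
      Aop_iter_contDiff t f hf' (k+1)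
    have key : ∀ x : ℝ,
        HasDerivAt (fun y => E y * g y)
          (E x * (Aop t g x) / (2 * Complex.I * (t : ℂ))) x := by
      intro x
      have hd : HasDerivAt (fun y => E y * g y)
          (E x * (-(Complex.I * (2 * x) / (4 * (t : ℂ)))) * g x + E x * deriv g x) x :=
        (hasDerivAt_E t x).mul (hgc.differentiable (by simp) x).hasDerivAt
      convert hd using 1
      have htC : (t : ℂ) ≠ 0 := Complex.ofReal_ne_zero.mpr ht
      rw [Aop]
      field_simp
      ring_nf
      simp [Complex.I_sq]
      try ring
    have hderiv : ∀ x : ℝ,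
        iteratedDeriv (k+1) (fun y : ℝ => E y * f y) x
          = E x * (Aop t)^[k+1] f x / (2 * Complex.I * (t : ℂ)) ^ (k+1) := by
      intro x
      rw [iteratedDeriv_succ]
      have hfe : iteratedDeriv k (fun y : ℝ => E y * f y)
          = fun y => E y * g y / (2 * Complex.I * (t : ℂ)) ^ k := funext ihd
      rw [hfe]
      have : HasDerivAt (fun y => E y * g y / (2 * Complex.I * (t : ℂ)) ^ k)
          (E x * (Aop t g x) / (2 * Complex.I * (t : ℂ)) / (2 * Complex.I * (t : ℂ)) ^ k) x :=
        (key x).div_const _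
      rw [this.deriv, Function.iterate_succ_apply', div_div, ← pow_succ']
    refine ⟨hderiv, ?_⟩
    have hmem : MemLp (fun x => E x * (Aop t)^[k+1] f x / (2 * Complex.I * (t : ℂ)) ^ (k+1))
        2 volume := by
      have h1 := (memE ((Aop t)^[k+1] f) hgc'.continuous
        (hA (k+1) (Nat.succ_le_succ (Nat.zero_le k)) hm)).const_mul
        (((2 * Complex.I * (t : ℂ)) ^ (k+1))⁻¹)
      have heq : (fun x => E x * (Aop t)^[k+1] f x / (2 * Complex.I * (t : ℂ)) ^ (k+1))
          = fun x => ((2 * Complex.I * (t : ℂ)) ^ (k+1))⁻¹ * (E x * (Aop t)^[k+1] f x) := by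
        funext x; rw [div_eq_mul_inv, mul_comm]
      rw [heq]; exact h1
    have : (iteratedDeriv (k+1) fun y : ℝ => E y * f y)
        = fun x => E x * (Aop t)^[k+1] f x / (2 * Complex.I * (t : ℂ)) ^ (k+1) := funext hderiv
    rw [this]
    exact hmem
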